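/- arXiv:1902.04442 — 4 statements merged into one kernel-verified Lean document; each statement's English description precedes it below -/
import Mathlib

section
/- Let E : ℝ² → ℝ be differentiable. Then for every j ∈ {1,2,3} and every point p = (x,y,z) ∈ ℝ³, the Lie bracket of the vector fields f₀ and f_j satisfies [f₀, f_j](p) = ( −(γ₁ⱼβ₁₁ + γ₁ⱼβ₁₂ ∂E/∂x(x,y) + γ₂ⱼβ₁₂ ∂E/∂y(x,y)), −(γ₂ⱼβ₂₂ + γ₁ⱼβ₂₂′ ∂E/∂x(x,y) + γ₂ⱼβ₂₂′ ∂E/∂y(x,y)), −γ₂ⱼβ₃₂ ). -/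
/-!
The fields `f j` are constant, so `[f₀, f j] = -Df₀ (f j)`; differentiating `f₀` by the chain
rule through `(x, y, z) ↦ (x, y)` and splitting `DE (γ₁, γ₂)` into partial derivatives gives the
formula.
-/

open VectorField

/-- Partial derivative with respect to the first variable. -/
noncomputable def pdx (E : ℝ × ℝ → ℝ) (q : ℝ × ℝ) : ℝ := fderiv ℝ E q (1, 0)

/-- Partial derivative with respect to the second variable. -/
noncomputable def pdy (E : ℝ × ℝ → ℝ) (q : ℝ × ℝ) : ℝ := fderiv ℝ E q (0, 1)

theorem VectorField.lieBracket_const_right {𝕜 F : Type*} [NontriviallyNormedField 𝕜]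
    [NormedAddCommGroup F] [NormedSpace 𝕜 F] (V : F → F) (w x : F) :
    lieBracket 𝕜 V (fun _ => w) x = -fderiv 𝕜 V x w := by
  simp [lieBracket]

theorem fderiv_comp_fst_snd_fst_apply {𝕜 X Y Z G : Type*} [NontriviallyNormedField 𝕜]
    [NormedAddCommGroup X] [NormedSpace 𝕜 X] [NormedAddCommGroup Y] [NormedSpace 𝕜 Y]
    [NormedAddCommGroup Z] [NormedSpace 𝕜 Z] [NormedAddCommGroup G] [NormedSpace 𝕜 G]
    {g : X × Y → G} {p : X × Y × Z} (hg : DifferentiableAt 𝕜 g (p.1, p.2.1)) (w : X × Y × Z) :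
    fderiv 𝕜 (fun y : X × Y × Z => g (y.1, y.2.1)) p w = fderiv 𝕜 g (p.1, p.2.1) (w.1, w.2.1) := by
  let π : X × Y × Z →L[𝕜] X × Y :=
    (ContinuousLinearMap.fst 𝕜 X (Y × Z)).prod
      ((ContinuousLinearMap.fst 𝕜 Y Z).comp (ContinuousLinearMap.snd 𝕜 X (Y × Z)))
  exact congrArg (· w) (hg.hasFDerivAt.comp p π.hasFDerivAt).fderiv

theorem fderiv_apply_eq_pdx_add_pdy (E : ℝ × ℝ → ℝ) (q : ℝ × ℝ) (a b : ℝ) :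
    fderiv ℝ E q (a, b) = a * pdx E q + b * pdy E q := by
  have hab : ((a, b) : ℝ × ℝ) = a • ((1, 0) : ℝ × ℝ) + b • ((0, 1) : ℝ × ℝ) := by simp
  rw [hab, map_add, map_smul, map_smul, pdx, pdy, smul_eq_mul, smul_eq_mul]

theorem fderiv_f₀_apply {α₁ α₂ α₃ β₁₁ β₁₂ β₁₃ β₂₂ β₂₂' β₃₂ β₃₃ : ℝ}
    {E : ℝ × ℝ → ℝ} {p : ℝ × ℝ × ℝ} (hE : DifferentiableAt ℝ E (p.1, p.2.1)) (w : ℝ × ℝ × ℝ) :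
    fderiv ℝ (fun p : ℝ × ℝ × ℝ => (α₁ + β₁₁ * p.1 + β₁₂ * E (p.1, p.2.1),
        α₂ + β₂₂ * p.2.1 + β₂₂' * E (p.1, p.2.1) + β₁₃ * p.2.2,
        α₃ + β₃₂ * p.2.1 + β₃₃ * p.2.2)) p w =
      (β₁₁ * w.1 + β₁₂ * fderiv ℝ E (p.1, p.2.1) (w.1, w.2.1),
        β₂₂ * w.2.1 + β₂₂' * fderiv ℝ E (p.1, p.2.1) (w.1, w.2.1) + β₁₃ * w.2.2,
        β₃₂ * w.2.1 + β₃₃ * w.2.2) := by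
  have hEπ : DifferentiableAt ℝ (fun p : ℝ × ℝ × ℝ => E (p.1, p.2.1)) p :=
    hE.comp p (by fun_prop)
  rw [DifferentiableAt.fderiv_prodMk (by fun_prop) (by fun_prop),
    DifferentiableAt.fderiv_prodMk (by fun_prop) (by fun_prop)]
  simp (disch := fun_prop) [fderiv_fun_add, fderiv_const_mul, fderiv.fst, fderiv.snd,
    fderiv_comp_fst_snd_fst_apply hE]

theorem stmt0 (α₁ α₂ α₃ β₁₁ β₁₂ β₁₃ β₂₂ β₂₂' β₃₂ β₃₃ : ℝ)
    (γ₁ γ₂ : Fin 3 → ℝ) (E : ℝ × ℝ → ℝ) (hE : Differentiable ℝ E)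
    (f₀ : ℝ × ℝ × ℝ → ℝ × ℝ × ℝ)
    (hf₀ : f₀ = fun p => (α₁ + β₁₁ * p.1 + β₁₂ * E (p.1, p.2.1),
      α₂ + β₂₂ * p.2.1 + β₂₂' * E (p.1, p.2.1) + β₁₃ * p.2.2,
      α₃ + β₃₂ * p.2.1 + β₃₃ * p.2.2))
    (f : Fin 3 → ℝ × ℝ × ℝ → ℝ × ℝ × ℝ)
    (hf : f = fun j _ => (γ₁ j, γ₂ j, (0 : ℝ))) :
    ∀ j : Fin 3, ∀ p : ℝ × ℝ × ℝ,
      lieBracket ℝ f₀ (f j) p =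
        (-(γ₁ j * β₁₁ + γ₁ j * β₁₂ * pdx E (p.1, p.2.1) + γ₂ j * β₁₂ * pdy E (p.1, p.2.1)),
         -(γ₂ j * β₂₂ + γ₁ j * β₂₂' * pdx E (p.1, p.2.1) + γ₂ j * β₂₂' * pdy E (p.1, p.2.1)),
         -(γ₂ j * β₃₂)) := by
  subst hf₀ hf
  intro j p
  rw [lieBracket_const_right, fderiv_f₀_apply (hE _), fderiv_apply_eq_pdx_add_pdy]
  simp only [Prod.neg_mk, Prod.mk.injEq]
  refine ⟨by ring, by ring, by ring⟩
end

section
/- Let E : ℝ² → ℝ be twice continuously differentiable (C²). Then for all i, j ∈ {1,2,3}, the iterated Lie brackets of vector fields satisfy the symmetry relation [f_i, [f₀, f_j]] = [f_j, [f₀, f_i]] as functions on ℝ³. -/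
/-!
For constant vector fields `v`, `w` and any `C²` field `V`, the double bracket `[v, [V, w]]`
equals `-D²V(v, w)`, so the identity is the symmetry of the second derivative (Schwarz).
The field `f₀` is `C²` because `E` is, and the `f_j` are constant.
-/

open VectorField

namespace VectorField

variable {𝕜 : Type*} [NontriviallyNormedField 𝕜] {E : Type*} [NormedAddCommGroup E]
  [NormedSpace 𝕜 E]

lemma lieBracket_const_left (v : E) (W : E → E) :
    lieBracket 𝕜 (fun _ => v) W = fun x => fderiv 𝕜 W x v := by
  ext x
  simp [lieBracket]

lemma lieBracket_const_right_s2 (V : E → E) (w : E) :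
    lieBracket 𝕜 V (fun _ => w) = fun x => -fderiv 𝕜 V x w := by
  ext x
  simp [lieBracket]

lemma lieBracket_const_lieBracket_const_apply {V : E → E} {x : E}
    (hV : DifferentiableAt 𝕜 (fderiv 𝕜 V) x) (v w : E) :
    lieBracket 𝕜 (fun _ => v) (lieBracket 𝕜 V (fun _ => w)) x =
      -fderiv 𝕜 (fderiv 𝕜 V) x v w := by
  have hderiv : fderiv 𝕜 (fun y => fderiv 𝕜 V y w) x = (fderiv 𝕜 (fderiv 𝕜 V) x).flip w := by
    simp [fderiv_clm_apply hV (differentiableAt_const w)]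
  simp [lieBracket_const_left, lieBracket_const_right_s2, hderiv]

theorem lieBracket_const_lieBracket_const_comm {n : WithTop ℕ∞} {V : E → E}
    (hV : ContDiff 𝕜 n V) (hn : minSmoothness 𝕜 2 ≤ n) (v w : E) :
    lieBracket 𝕜 (fun _ => v) (lieBracket 𝕜 V (fun _ => w)) =
      lieBracket 𝕜 (fun _ => w) (lieBracket 𝕜 V (fun _ => v)) := by
  have hV' : Differentiable 𝕜 (fderiv 𝕜 V) := by
    have h2n : (1 : WithTop ℕ∞) + 1 ≤ n := le_trans le_minSmoothness hn
    exact (hV.fderiv_right h2n).differentiable one_ne_zero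
  ext1 x
  rw [lieBracket_const_lieBracket_const_apply (hV' x),
    lieBracket_const_lieBracket_const_apply (hV' x),
    (hV.contDiffAt.isSymmSndFDerivAt hn).eq]

end VectorField

theorem stmt2 (α₁ α₂ α₃ β₁₁ β₁₂ β₁₃ β₂₂ β₂₂' β₃₂ β₃₃ : ℝ)
    (γ₁ γ₂ : Fin 3 → ℝ) (E : ℝ × ℝ → ℝ) (hE : ContDiff ℝ 2 E)
    (f₀ : ℝ × ℝ × ℝ → ℝ × ℝ × ℝ)
    (hf₀ : f₀ = fun p => (α₁ + β₁₁ * p.1 + β₁₂ * E (p.1, p.2.1),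
      α₂ + β₂₂ * p.2.1 + β₂₂' * E (p.1, p.2.1) + β₁₃ * p.2.2,
      α₃ + β₃₂ * p.2.1 + β₃₃ * p.2.2))
    (f : Fin 3 → ℝ × ℝ × ℝ → ℝ × ℝ × ℝ)
    (hf : f = fun j _ => (γ₁ j, γ₂ j, (0 : ℝ))) :
    ∀ i j : Fin 3,
      lieBracket ℝ (f i) (lieBracket ℝ f₀ (f j)) =
        lieBracket ℝ (f j) (lieBracket ℝ f₀ (f i)) := by
  have hf₀_smooth : ContDiff ℝ 2 f₀ := by
    have hE' : ContDiff ℝ 2 (fun p : ℝ × ℝ × ℝ => E (p.1, p.2.1)) := by fun_prop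
    rw [hf₀]
    fun_prop
  intro i j
  rw [hf]
  exact lieBracket_const_lieBracket_const_comm hf₀_smooth (by simp) _ _
end

section
/- Let E : ℝ² → ℝ be smooth. Assume: (i) for all i, j ∈ {1,2,3} there are constants c_{ij} ∈ ℝ with Δ_{ij}E(x,y) = c_{ij} for all (x,y); (ii) for all i, j ∈ {1,2,3}, [[f₀, f_i], [f₀, f_j]] = 0 identically; (iii) for each i ∈ {1,2,3} there exists λ_i ∈ ℝ with [[f₀, f_i], B] = λ_i · B identically (B viewed as a constant vector field). Then the set 𝔞_E = { a₁f₁ + a₂f₂ + a₃f₃ + b₁[f₀,f₁] + b₂[f₀,f₂] + b₃[f₀,f₃] + cB : a₁,a₂,a₃,b₁,b₂,b₃,c ∈ ℝ } of vector fields on ℝ³ is closed under the Lie bracket of vector fields; that is, the bracket of any two elements of 𝔞_E again lies in 𝔞_E. -/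
open VectorField

noncomputable def Hess (E : ℝ × ℝ → ℝ) : ℝ × ℝ → (ℝ × ℝ) →L[ℝ] (ℝ × ℝ) →L[ℝ] ℝ :=
  fderiv ℝ (fderiv ℝ E)

noncomputable def piL : (ℝ × ℝ × ℝ) →L[ℝ] ℝ × ℝ :=
  (ContinuousLinearMap.fst ℝ ℝ (ℝ × ℝ)).prod
    ((ContinuousLinearMap.fst ℝ ℝ ℝ).comp (ContinuousLinearMap.snd ℝ ℝ (ℝ × ℝ)))

section aux

variable {E : ℝ × ℝ → ℝ}

lemma hess_hasFDerivAt (hE : ContDiff ℝ (⊤ : ℕ∞) E) (q : ℝ × ℝ) :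
    HasFDerivAt (fderiv ℝ E) (Hess E q) q :=
  (((hE.fderiv_right (m := 1) (by exact WithTop.coe_le_coe.mpr le_top)).differentiable one_ne_zero) q).hasFDerivAt

lemma fderiv_apply_hasFDerivAt (hE : ContDiff ℝ (⊤ : ℕ∞) E) (v : ℝ × ℝ) (q : ℝ × ℝ) :
    HasFDerivAt (fun q' => fderiv ℝ E q' v) ((Hess E q).flip v) q := by
  have h := (hess_hasFDerivAt hE q).clm_apply (hasFDerivAt_const v q)
  simpa using h

lemma pdx_hasFDerivAt (hE : ContDiff ℝ (⊤ : ℕ∞) E) (q : ℝ × ℝ) :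
    HasFDerivAt (pdx E) ((Hess E q).flip (1, 0)) q :=
  fderiv_apply_hasFDerivAt hE (1, 0) q

lemma pdy_hasFDerivAt (hE : ContDiff ℝ (⊤ : ℕ∞) E) (q : ℝ × ℝ) :
    HasFDerivAt (pdy E) ((Hess E q).flip (0, 1)) q :=
  fderiv_apply_hasFDerivAt hE (0, 1) q

lemma hess_symm (hE : ContDiff ℝ (⊤ : ℕ∞) E) (q : ℝ × ℝ) (u v : ℝ × ℝ) :
    Hess E q u v = Hess E q v u :=
  second_derivative_symmetric (fun y => ((hE.differentiable (by simp)) y).hasFDerivAt)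
    (hess_hasFDerivAt hE q) u v

lemma pdx_pdx_eq (hE : ContDiff ℝ (⊤ : ℕ∞) E) (q : ℝ × ℝ) :
    pdx (pdx E) q = Hess E q (1, 0) (1, 0) := by
  rw [pdx, (pdx_hasFDerivAt hE q).fderiv]; rfl

lemma pdy_pdx_eq (hE : ContDiff ℝ (⊤ : ℕ∞) E) (q : ℝ × ℝ) :
    pdy (pdx E) q = Hess E q (0, 1) (1, 0) := by
  rw [pdy, (pdx_hasFDerivAt hE q).fderiv]; rfl

lemma pdy_pdy_eq (hE : ContDiff ℝ (⊤ : ℕ∞) E) (q : ℝ × ℝ) :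
    pdy (pdy E) q = Hess E q (0, 1) (0, 1) := by
  rw [pdy, (pdy_hasFDerivAt hE q).fderiv]; rfl

lemma bilin_expand (T : (ℝ × ℝ) →L[ℝ] (ℝ × ℝ) →L[ℝ] ℝ) (a b c d : ℝ) :
    T (a, b) (c, d) = a * c * T (1, 0) (1, 0) + a * d * T (1, 0) (0, 1)
      + b * c * T (0, 1) (1, 0) + b * d * T (0, 1) (0, 1) := by
  have h1 : (a, b) = a • ((1 : ℝ), (0 : ℝ)) + b • ((0 : ℝ), (1 : ℝ)) := by simp
  have h2 : (c, d) = c • ((1 : ℝ), (0 : ℝ)) + d • ((0 : ℝ), (1 : ℝ)) := by simp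
  rw [h1, h2, map_add, map_smul, map_smul]
  simp only [ContinuousLinearMap.add_apply, ContinuousLinearMap.smul_apply, map_add, map_smul,
    smul_eq_mul]
  ring

lemma Epi_hasFDerivAt (hE : ContDiff ℝ (⊤ : ℕ∞) E) (p : ℝ × ℝ × ℝ) :
    HasFDerivAt (fun p : ℝ × ℝ × ℝ => E (p.1, p.2.1))
      ((fderiv ℝ E (p.1, p.2.1)).comp piL) p :=
  (((hE.differentiable (by simp)) (p.1, p.2.1)).hasFDerivAt).comp p (piL.hasFDerivAt)

lemma f0_hasFDerivAt (hE : ContDiff ℝ (⊤ : ℕ∞) E)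
    (α₁ β₁₁ β₁₂ α₂ β₂₂ β₂₂' β₁₃ α₃ β₃₂ β₃₃ : ℝ) (p : ℝ × ℝ × ℝ) :
    HasFDerivAt (fun p : ℝ × ℝ × ℝ => (α₁ + β₁₁ * p.1 + β₁₂ * E (p.1, p.2.1),
      α₂ + β₂₂ * p.2.1 + β₂₂' * E (p.1, p.2.1) + β₁₃ * p.2.2,
      α₃ + β₃₂ * p.2.1 + β₃₃ * p.2.2))
      ((((0 : (ℝ×ℝ×ℝ) →L[ℝ] ℝ) + β₁₁ • (ContinuousLinearMap.fst ℝ ℝ (ℝ×ℝ)))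
          + β₁₂ • ((fderiv ℝ E (p.1, p.2.1)).comp piL)).prod
       (((((0 : (ℝ×ℝ×ℝ) →L[ℝ] ℝ)
          + β₂₂ • ((ContinuousLinearMap.fst ℝ ℝ ℝ).comp (ContinuousLinearMap.snd ℝ ℝ (ℝ×ℝ))))
          + β₂₂' • ((fderiv ℝ E (p.1, p.2.1)).comp piL))
          + β₁₃ • ((ContinuousLinearMap.snd ℝ ℝ ℝ).comp (ContinuousLinearMap.snd ℝ ℝ (ℝ×ℝ)))).prod
        (((0 : (ℝ×ℝ×ℝ) →L[ℝ] ℝ)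
          + β₃₂ • ((ContinuousLinearMap.fst ℝ ℝ ℝ).comp (ContinuousLinearMap.snd ℝ ℝ (ℝ×ℝ))))
          + β₃₃ • ((ContinuousLinearMap.snd ℝ ℝ ℝ).comp (ContinuousLinearMap.snd ℝ ℝ (ℝ×ℝ)))))) p := by
  have h1 : HasFDerivAt (fun p : ℝ × ℝ × ℝ => p.1) (ContinuousLinearMap.fst ℝ ℝ (ℝ×ℝ)) p :=
    (ContinuousLinearMap.fst ℝ ℝ (ℝ×ℝ)).hasFDerivAt
  have h21 : HasFDerivAt (fun p : ℝ × ℝ × ℝ => p.2.1)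
      ((ContinuousLinearMap.fst ℝ ℝ ℝ).comp (ContinuousLinearMap.snd ℝ ℝ (ℝ×ℝ))) p :=
    ((ContinuousLinearMap.fst ℝ ℝ ℝ).comp (ContinuousLinearMap.snd ℝ ℝ (ℝ×ℝ))).hasFDerivAt
  have h22 : HasFDerivAt (fun p : ℝ × ℝ × ℝ => p.2.2)
      ((ContinuousLinearMap.snd ℝ ℝ ℝ).comp (ContinuousLinearMap.snd ℝ ℝ (ℝ×ℝ))) p :=
    ((ContinuousLinearMap.snd ℝ ℝ ℝ).comp (ContinuousLinearMap.snd ℝ ℝ (ℝ×ℝ))).hasFDerivAt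
  have hEp := Epi_hasFDerivAt hE p
  exact HasFDerivAt.prodMk (((hasFDerivAt_const α₁ p).add (h1.const_mul β₁₁)).add (hEp.const_mul β₁₂))
    (HasFDerivAt.prodMk ((((hasFDerivAt_const α₂ p).add (h21.const_mul β₂₂)).add (hEp.const_mul β₂₂')).add
      (h22.const_mul β₁₃))
     (((hasFDerivAt_const α₃ p).add (h21.const_mul β₃₂)).add (h22.const_mul β₃₃)))

noncomputable def Gf (E : ℝ × ℝ → ℝ) (β₁₁ β₁₂ β₂₂ β₂₂' β₃₂ g1 g2 : ℝ) :
    (ℝ × ℝ × ℝ) → ℝ × ℝ × ℝ := fun p =>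
  (-(β₁₁ * g1 + β₁₂ * fderiv ℝ E (p.1, p.2.1) (g1, g2)),
   -(β₂₂ * g2 + β₂₂' * fderiv ℝ E (p.1, p.2.1) (g1, g2)),
   -(β₃₂ * g2))

lemma phi_hasFDerivAt (hE : ContDiff ℝ (⊤ : ℕ∞) E) (g1 g2 : ℝ) (p : ℝ × ℝ × ℝ) :
    HasFDerivAt (fun p : ℝ × ℝ × ℝ => fderiv ℝ E (p.1, p.2.1) (g1, g2))
      (((Hess E (p.1, p.2.1)).flip (g1, g2)).comp piL) p :=
  by have h := (fderiv_apply_hasFDerivAt hE (g1, g2) (p.1, p.2.1)).comp p piL.hasFDerivAt; exact h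

lemma Gf_hasFDerivAt (hE : ContDiff ℝ (⊤ : ℕ∞) E) (β₁₁ β₁₂ β₂₂ β₂₂' β₃₂ g1 g2 : ℝ) (p : ℝ × ℝ × ℝ) :
    HasFDerivAt (Gf E β₁₁ β₁₂ β₂₂ β₂₂' β₃₂ g1 g2)
      ((-((0 : (ℝ×ℝ×ℝ) →L[ℝ] ℝ) + β₁₂ • (((Hess E (p.1, p.2.1)).flip (g1, g2)).comp piL))).prod
        ((-((0 : (ℝ×ℝ×ℝ) →L[ℝ] ℝ) + β₂₂' • (((Hess E (p.1, p.2.1)).flip (g1, g2)).comp piL))).prod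
          0)) p := by
  have hφ := phi_hasFDerivAt hE g1 g2 p
  exact HasFDerivAt.prodMk (((hasFDerivAt_const (β₁₁ * g1) p).add (hφ.const_mul β₁₂)).neg)
    (HasFDerivAt.prodMk (((hasFDerivAt_const (β₂₂ * g2) p).add (hφ.const_mul β₂₂')).neg)
      (hasFDerivAt_const (-(β₃₂ * g2)) p))

lemma Gf_differentiableAt (hE : ContDiff ℝ (⊤ : ℕ∞) E) (β₁₁ β₁₂ β₂₂ β₂₂' β₃₂ g1 g2 : ℝ)
    (p : ℝ × ℝ × ℝ) : DifferentiableAt ℝ (Gf E β₁₁ β₁₂ β₂₂ β₂₂' β₃₂ g1 g2) p :=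
  (Gf_hasFDerivAt hE β₁₁ β₁₂ β₂₂ β₂₂' β₃₂ g1 g2 p).differentiableAt

lemma Gf_fderiv_apply (hE : ContDiff ℝ (⊤ : ℕ∞) E) (β₁₁ β₁₂ β₂₂ β₂₂' β₃₂ g1 g2 : ℝ) (p : ℝ × ℝ × ℝ)
    (u v w : ℝ) :
    fderiv ℝ (Gf E β₁₁ β₁₂ β₂₂ β₂₂' β₃₂ g1 g2) p (u, v, w) =
      (-(β₁₂ * Hess E (p.1, p.2.1) (u, v) (g1, g2)),
       -(β₂₂' * Hess E (p.1, p.2.1) (u, v) (g1, g2)), 0) := by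
  rw [(Gf_hasFDerivAt hE β₁₁ β₁₂ β₂₂ β₂₂' β₃₂ g1 g2 p).fderiv]
  simp [piL, ContinuousLinearMap.prod_apply]

end aux

theorem stmt6 (α₁ α₂ α₃ β₁₁ β₁₂ β₁₃ β₂₂ β₂₂' β₃₂ β₃₃ : ℝ)
    (γ₁ γ₂ : Fin 3 → ℝ) (E : ℝ × ℝ → ℝ) (hE : ContDiff ℝ (⊤ : ℕ∞) E)
    (f₀ : ℝ × ℝ × ℝ → ℝ × ℝ × ℝ)
    (hf₀ : f₀ = fun p => (α₁ + β₁₁ * p.1 + β₁₂ * E (p.1, p.2.1),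
      α₂ + β₂₂ * p.2.1 + β₂₂' * E (p.1, p.2.1) + β₁₃ * p.2.2,
      α₃ + β₃₂ * p.2.1 + β₃₃ * p.2.2))
    (f : Fin 3 → ℝ × ℝ × ℝ → ℝ × ℝ × ℝ)
    (hf : f = fun j _ => (γ₁ j, γ₂ j, (0 : ℝ)))
    (B : ℝ × ℝ × ℝ) (hB : B = (-β₁₂, -β₂₂', (0 : ℝ)))
    (Δ : Fin 3 → Fin 3 → ℝ × ℝ → ℝ)
    (hΔ : ∀ i j q, Δ i j q =
      γ₁ i * γ₁ j * pdx (pdx E) q + (γ₁ i * γ₂ j + γ₁ j * γ₂ i) * pdy (pdx E) q +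
        γ₂ i * γ₂ j * pdy (pdy E) q)
    (h₁ : ∀ i j : Fin 3, ∃ c : ℝ, ∀ q : ℝ × ℝ, Δ i j q = c)
    (h₂ : ∀ i j : Fin 3,
      lieBracket ℝ (lieBracket ℝ f₀ (f i)) (lieBracket ℝ f₀ (f j)) = 0)
    (h₃ : ∀ i : Fin 3, ∃ lam : ℝ,
      ∀ p : ℝ × ℝ × ℝ, lieBracket ℝ (lieBracket ℝ f₀ (f i)) (fun _ => B) p = lam • B)
    (S : Set (ℝ × ℝ × ℝ → ℝ × ℝ × ℝ))
    (hS : S = {V | ∃ a b : Fin 3 → ℝ, ∃ c : ℝ,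
      V = fun p => (∑ i, a i • f i p) + (∑ i, b i • lieBracket ℝ f₀ (f i) p) + c • B}) :
    ∀ V ∈ S, ∀ W ∈ S, lieBracket ℝ V W ∈ S := by
  choose cc hcc using h₁
  choose lam hlam using h₃
  set G : Fin 3 → (ℝ × ℝ × ℝ) → ℝ × ℝ × ℝ :=
    fun i => Gf E β₁₁ β₁₂ β₂₂ β₂₂' β₃₂ (γ₁ i) (γ₂ i) with hGdef
  -- the value of fderiv f₀
  have hval : ∀ (p : ℝ × ℝ × ℝ) (u v : ℝ), fderiv ℝ f₀ p (u, v, (0:ℝ)) =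
      (β₁₁ * u + β₁₂ * fderiv ℝ E (p.1, p.2.1) (u, v),
       β₂₂ * v + β₂₂' * fderiv ℝ E (p.1, p.2.1) (u, v), β₃₂ * v) := by
    intro p u v
    rw [hf₀, (f0_hasFDerivAt hE α₁ β₁₁ β₁₂ α₂ β₂₂ β₂₂' β₁₃ α₃ β₃₂ β₃₃ p).fderiv]
    simp [piL, ContinuousLinearMap.prod_apply]
  have hfp : ∀ (i : Fin 3) (p : ℝ × ℝ × ℝ), f i p = (γ₁ i, γ₂ i, (0:ℝ)) := by
    simp [hf]
  -- lieBracket f₀ (f i) = G i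
  have hg : ∀ i, lieBracket ℝ f₀ (f i) = G i := by
    intro i
    funext p
    show fderiv ℝ (f i) p (f₀ p) - fderiv ℝ f₀ p (f i p) = G i p
    rw [hfp, hval]
    have : fderiv ℝ (f i) p = 0 := by rw [hf]; exact fderiv_const_apply _
    rw [this]
    show (0 : ℝ × ℝ × ℝ) - _ = _
    simp [hGdef, Gf, Prod.ext_iff]
  -- fderiv of G i applied to the constant fields
  have hFij : ∀ (i j : Fin 3) (x : ℝ × ℝ × ℝ),
      fderiv ℝ (G i) x ((γ₁ j, γ₂ j, (0:ℝ))) = cc i j • B := by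
    intro i j x
    rw [hGdef]
    rw [Gf_fderiv_apply hE]
    have hH : Hess E (x.1, x.2.1) (γ₁ j, γ₂ j) (γ₁ i, γ₂ i) = cc i j := by
      have hc := hcc i j (x.1, x.2.1)
      rw [hΔ i j (x.1, x.2.1), pdx_pdx_eq hE, pdy_pdx_eq hE, pdy_pdy_eq hE] at hc
      rw [bilin_expand]
      have hs : Hess E (x.1, x.2.1) (1, 0) (0, 1) = Hess E (x.1, x.2.1) (0, 1) (1, 0) :=
        hess_symm hE _ _ _
      rw [hs]
      linarith [hc]
    rw [hH, hB]
    simp [Prod.ext_iff]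
    constructor <;> ring
  -- fderiv of G i applied to B
  have hBval : ∀ (i : Fin 3) (x : ℝ × ℝ × ℝ),
      fderiv ℝ (G i) x B = (-(lam i)) • B := by
    intro i x
    have h := hlam i x
    rw [hg i] at h
    have h0 : fderiv ℝ (fun _ : ℝ × ℝ × ℝ => B) x = 0 := fderiv_const_apply _
    rw [VectorField.lieBracket, h0] at h
    simp only [ContinuousLinearMap.zero_apply, zero_sub] at h
    rw [neg_smul, ← h, neg_neg]
  -- symmetry of the G cross terms
  have hGsym : ∀ (i j : Fin 3) (x : ℝ × ℝ × ℝ),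
      fderiv ℝ (G i) x (G j x) = fderiv ℝ (G j) x (G i x) := by
    intro i j x
    have h := congrFun (h₂ j i) x
    rw [hg i, hg j] at h
    rw [VectorField.lieBracket] at h
    have h' : fderiv ℝ (G i) x (G j x) - fderiv ℝ (G j) x (G i x) = 0 := by simpa using h
    exact sub_eq_zero.mp h'
  have hGdiff : ∀ (i : Fin 3) (x : ℝ × ℝ × ℝ), DifferentiableAt ℝ (G i) x := by
    intro i x; exact Gf_differentiableAt hE _ _ _ _ _ _ _ x
  -- main argument
  subst hS
  rintro V ⟨a, b, c, hV⟩ W ⟨a', b', c', hW⟩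
  simp only [hg, hfp] at hV hW
  refine ⟨0, 0,
    (∑ i, ∑ j, (b' i * a j - b i * a' j) * cc i j) + ∑ i, (b i * c' - b' i * c) * lam i, ?_⟩
  funext x
  simp only [Pi.zero_apply, zero_smul, Finset.sum_const_zero, zero_add]
  have hdV : fderiv ℝ V x = ∑ i, b i • fderiv ℝ (G i) x := by
    rw [hV, fderiv_add_const, fderiv_const_add, fderiv_fun_sum (A := fun i p => b i • G i p) (fun i _ => (hGdiff i x).const_smul (b i))]
    exact Finset.sum_congr rfl fun i _ => fderiv_fun_const_smul (hGdiff i x) (b i)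
  have hdW : fderiv ℝ W x = ∑ i, b' i • fderiv ℝ (G i) x := by
    rw [hW, fderiv_add_const, fderiv_const_add, fderiv_fun_sum (A := fun i p => b' i • G i p) (fun i _ => (hGdiff i x).const_smul (b' i))]
    exact Finset.sum_congr rfl fun i _ => fderiv_fun_const_smul (hGdiff i x) (b' i)
  have hVx : V x = (∑ j, a j • ((γ₁ j, γ₂ j, (0:ℝ)))) + (∑ j, b j • G j x) + c • B := by
    rw [hV]
  have hWx : W x = (∑ j, a' j • ((γ₁ j, γ₂ j, (0:ℝ)))) + (∑ j, b' j • G j x) + c' • B := by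
    rw [hW]
  show fderiv ℝ W x (V x) - fderiv ℝ V x (W x) = _
  rw [hdV, hdW, hVx, hWx]
  simp only [ContinuousLinearMap.sum_apply, ContinuousLinearMap.smul_apply, map_add, map_sum,
    map_smul, hFij, hBval]
  simp only [Fin.sum_univ_three]
  rw [hGsym 1 0 x, hGsym 2 0 x, hGsym 2 1 x]
  module
end

section
/- Let c = (c_{ij}) be an invertible real 3×3 matrix. Then the center of the Lie algebra 𝔞_c is exactly the one-dimensional subspace spanned by Z. -/
/-- The 7-dimensional space `ℝ⁷` underlying the Lie algebra `𝔞_c`. -/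
abbrev A7 : Type := (Fin 3 → ℝ) × (Fin 3 → ℝ) × ℝ

/-- The basis vector `Z`. -/
def Zb : A7 := (0, 0, 1)

/-- The bracket of `𝔞_c`: `[Xᵢ, Yⱼ] = cᵢⱼ Z`, `[Yⱼ, Xᵢ] = -cᵢⱼ Z`, all other
brackets of basis vectors zero. -/
def brkt (c : Matrix (Fin 3) (Fin 3) ℝ) (v w : A7) : A7 :=
  (0, 0, ∑ i, ∑ j, c i j * (v.1 i * w.2.1 j - w.1 i * v.2.1 j))

lemma mulVec_zero_of_isUnit {c : Matrix (Fin 3) (Fin 3) ℝ} (hc : IsUnit c)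
    {x : Fin 3 → ℝ} (h : c.mulVec x = 0) : x = 0 := by
  have : c⁻¹.mulVec (c.mulVec x) = x := by
    rw [Matrix.mulVec_mulVec, Matrix.nonsing_inv_mul c
      ((Matrix.isUnit_iff_isUnit_det c).mp hc), Matrix.one_mulVec]
  rw [h, Matrix.mulVec_zero] at this
  exact this.symm

theorem stmt8 (c : Matrix (Fin 3) (Fin 3) ℝ) (hc : IsUnit c) :
    {v : A7 | ∀ w : A7, brkt c v w = 0} = ↑(Submodule.span ℝ {Zb}) := by
  ext v
  simp only [Set.mem_setOf_eq, SetLike.mem_coe, Submodule.mem_span_singleton]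
  constructor
  · intro h
    -- v.1 = 0 : test with w = (0, e_j, 0)
    have h1 : v.1 = 0 := by
      have key : c.transpose.mulVec v.1 = 0 := by
        funext j
        have := h (0, Pi.single j 1, 0)
        have := congrArg (fun p : A7 => p.2.2) this
        simp only [brkt, Pi.zero_apply, mul_zero, zero_mul] at this
        simpa [Matrix.mulVec, dotProduct, Matrix.transpose_apply,
          Pi.single_apply, Finset.mul_sum, mul_comm] using this
      exact mulVec_zero_of_isUnit ((Matrix.isUnit_iff_isUnit_det _).mpr
        (by rw [Matrix.det_transpose]; exact (Matrix.isUnit_iff_isUnit_det c).mp hc)) key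
    have h2 : v.2.1 = 0 := by
      have key : c.mulVec v.2.1 = 0 := by
        funext i
        have := h (Pi.single i 1, 0, 0)
        have := congrArg (fun p : A7 => p.2.2) this
        simp only [brkt, Pi.zero_apply, mul_zero, zero_mul] at this
        simpa [Matrix.mulVec, dotProduct, Pi.single_apply,
          Finset.sum_comm (γ := Fin 3)] using this
      exact mulVec_zero_of_isUnit hc key
    exact ⟨v.2.2, by rw [Prod.ext_iff, Prod.ext_iff]; simp [Zb, h1, h2]⟩
  · rintro ⟨a, rfl⟩ w
    simp [brkt, Zb]
end
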